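/- For any nonempty diagram of the form D_{XY} arising from a shifted skew diagram D, and any subsets X' ⊆ X and Y' ⊆ Y, one has rect(D_{X'Y'}) ≤ rect(D_{XY}). -/

import Mathlib

/-!
Call a list of cells a separated chain if each of its cells lies strictly south-west of every
earlier one and, for any two of them, the other two corners of the rectangle they span are not
cells. The rectangularity of `D_{XY}` is the largest length of a separated chain in `D_{XY}`, and a
separated chain in `D_{X'Y'}` is one in `D_{XY}`, since whether a cell lies in `D` does not depend
on the rows and columns kept.

The top cells of the full rectangles and of the pedestal recorded by the decomposition form a
separated chain. Conversely, follow a separated chain through the decomposition: an empty rectangle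
contains none of its cells; after a full rectangle, all its cells but the first lie strictly below
and to the left of the neck cell, hence in the rows and columns left to the recursion; after a
pedestal, no second cell can exist. The last two facts hold because the column `i + λ_i` where row
`i` ends, and the column `i + μ_i` after which it starts when `μ_i > 0`, weakly decrease with `i`.
-/

open scoped Classical

noncomputable section

namespace SkewDiag

/-- A shifted skew diagram `D = λ/μ`, where `λ, μ` are strict partitions
(strictly decreasing while positive) with `μ ⊆ λ`.  Rows are indexed by `1, 2, …`. -/
structure ShiftedSkew where
  lam : ℕ → ℕ
  mu : ℕ → ℕ
  lam_strict : ∀ i, 1 ≤ i → 0 < lam (i + 1) → lam (i + 1) < lam i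
  mu_strict : ∀ i, 1 ≤ i → 0 < mu (i + 1) → mu (i + 1) < mu i
  mu_le : ∀ i, mu i ≤ lam i

/-- The cell `(i,j)` of the shifted plane belongs to `λ/μ`:  row `i ≥ 1` occupies
columns `i + μ_i + 1, …, i + λ_i`. -/
def ShiftedSkew.HasCell (D : ShiftedSkew) (c : ℕ × ℕ) : Prop :=
  1 ≤ c.1 ∧ c.1 + D.mu c.1 < c.2 ∧ c.2 ≤ c.1 + D.lam c.1

/-- The restriction `D_{XY}` of the diagram `D` to the rows indexed by `X` and the
columns indexed by `Y`. -/
def restrictD (D : ShiftedSkew) (Xs Ys : Finset ℕ) : Finset (ℕ × ℕ) :=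
  (Xs ×ˢ Ys).filter fun c => D.HasCell c

/-- The pieces produced by the rectangular decomposition algorithm: empty rectangles,
full rectangles, and pedestals (each recorded with its sets of rows and columns). -/
inductive Piece where
  | emptyR : Finset ℕ → Finset ℕ → Piece
  | fullR : Finset ℕ → Finset ℕ → Piece
  | ped : Finset ℕ → Finset ℕ → Piece
deriving DecidableEq

/-- One pass of the rectangular decomposition algorithm on the diagram with cells
`cells`, rows `Xs` and columns `Ys` (with enough `fuel` this computes the full
rectangular decomposition together with the set of excess cells). -/
def decompAux (cells : Finset (ℕ × ℕ)) : ℕ → Finset ℕ → Finset ℕ → List Piece × Finset (ℕ × ℕ)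
  | 0, _, _ => ([], ∅)
  | fuel + 1, Xs, Ys =>
    if Xs = ∅ ∧ Ys = ∅ then ([], ∅)
    else
      -- the position of the would-be top cell
      let x1 := Xs.min.untopD 0
      let yn := Ys.max.unbotD 0
      if (x1, yn) ∈ cells then
        -- Case 2: there is a top cell
        let m' := ((Xs.filter fun x => (x, yn) ∈ cells).max).unbotD 0
        let n' := ((Ys.filter fun y => (x1, y) ∈ cells).min).untopD 0
        let X' := Xs.filter (· ≤ m')
        let Y' := Ys.filter (n' ≤ ·)
        let ex := cells.filter fun c =>
          (c.1 ∈ Xs \ X' ∧ c.2 ∈ Y') ∨ (c.1 ∈ X' ∧ c.2 ∈ Ys \ Y')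
        if (m', n') ∈ cells then
          -- Subcase 2a: there is a neck cell; record a full rectangle
          let r := decompAux cells fuel (Xs \ X') (Ys \ Y')
          (Piece.fullR X' Y' :: r.1, ex ∪ r.2)
        else
          -- Subcase 2b: no neck cell; record the pedestal and stop
          ([Piece.ped X' Y'], ex)
      else
        -- Case 1: no top cell; record an empty rectangle
        let X' := Xs.filter fun x => ∀ x'' ∈ Xs, x'' ≤ x → ∀ y ∈ Ys, (x'', y) ∉ cells
        let Y' := Ys.filter fun y => ∀ y'' ∈ Ys, y ≤ y'' → ∀ x ∈ Xs, (x, y'') ∉ cells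
        let r := decompAux cells fuel (Xs \ X') (Ys \ Y')
        (Piece.emptyR X' Y' :: r.1, r.2)

/-- The list of pieces of the rectangular decomposition of the diagram with cells
`cells`, rows `Xs` and columns `Ys`. -/
def pieces (cells : Finset (ℕ × ℕ)) (Xs Ys : Finset ℕ) : List Piece :=
  (decompAux cells (Xs.card + Ys.card + 1) Xs Ys).1

/-- The set of excess cells produced by the rectangular decomposition. -/
def excessCells (cells : Finset (ℕ × ℕ)) (Xs Ys : Finset ℕ) : Finset (ℕ × ℕ) :=
  (decompAux cells (Xs.card + Ys.card + 1) Xs Ys).2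

/-- The rectangularity: the number of full rectangles and pedestals in the
rectangular decomposition. -/
def rectNum (cells : Finset (ℕ × ℕ)) (Xs Ys : Finset ℕ) : ℕ :=
  (pieces cells Xs Ys).countP fun p =>
    match p with
    | Piece.fullR _ _ => true
    | Piece.ped _ _ => true
    | Piece.emptyR _ _ => false

/-- A diagram is spherical if its rectangular decomposition consists of full rectangles
only (and possibly excess cells): no empty rectangles and no pedestal. -/
def IsSpherical (cells : Finset (ℕ × ℕ)) (Xs Ys : Finset ℕ) : Prop :=
  ∀ p ∈ pieces cells Xs Ys, ∃ A B, p = Piece.fullR A B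

/-- The rectangular decomposition contains an empty rectangle. -/
def HasEmptyR (cells : Finset (ℕ × ℕ)) (Xs Ys : Finset ℕ) : Prop :=
  ∃ A B, Piece.emptyR A B ∈ pieces cells Xs Ys

/-- The rectangular decomposition contains a pedestal. -/
def HasPed (cells : Finset (ℕ × ℕ)) (Xs Ys : Finset ℕ) : Prop :=
  ∃ A B, Piece.ped A B ∈ pieces cells Xs Ys

/-- The staircase cells of the diagram `D_X`: cells `(x_i, x_{i+1})` in a pair of
consecutive rows/columns of `X`. -/
def staircase (cells : Finset (ℕ × ℕ)) (Xs : Finset ℕ) : Finset (ℕ × ℕ) :=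
  cells.filter fun c => c.1 ∈ Xs ∧ c.2 ∈ Xs ∧ c.1 < c.2 ∧ ∀ z ∈ Xs, z ≤ c.1 ∨ c.2 ≤ z

/-- The non-excess staircase cells of `D_X`. -/
def nonexcessStaircase (cells : Finset (ℕ × ℕ)) (Xs : Finset ℕ) : Finset (ℕ × ℕ) :=
  staircase cells Xs \ excessCells cells Xs Xs

/-- The bipartite graph `G^bip_{XY}(D)` on vertex set `X ⊔ Y`, with an edge `{x, y}`
for every cell `(x,y)` of `D_{XY}`. -/
def bipGraphS (D : ShiftedSkew) (Xs Ys : Finset ℕ) : SimpleGraph (↥Xs ⊕ ↥Ys) :=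
  SimpleGraph.fromRel fun a b =>
    ∃ (x : Xs) (y : Ys), D.HasCell ((x : ℕ), (y : ℕ)) ∧ a = Sum.inl x ∧ b = Sum.inr y

/-- The nonbipartite graph `G^nonbip_X(D)` on vertex set `X`, with an edge `{x, x'}`
for every cell `(x,x')` of `D_X`. -/
def nonbipGraphS (D : ShiftedSkew) (Xs : Finset ℕ) : SimpleGraph ↥Xs :=
  SimpleGraph.fromRel fun a b => D.HasCell ((a : ℕ), (b : ℕ))

/-- The geometric realization of the independence complex `Δ(G)` of the graph `G`:
the faces of `Δ(G)` are the subsets of the vertex set containing no edge of `G`. -/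
def indepRealization {V : Type} [Fintype V] (G : SimpleGraph V) : Set (V → ℝ) :=
  {f | (∀ v, 0 ≤ f v) ∧ (∑ v, f v) = 1 ∧ ∀ u v, G.Adj u v → f u = 0 ∨ f v = 0}

lemma _root_.Finset.min_untopD_eq_min' {α : Type*} [LinearOrder α] {s : Finset α}
    (hs : s.Nonempty) (d : α) : s.min.untopD d = s.min' hs := by
  rw [← Finset.coe_min' hs, WithTop.untopD_coe]

lemma _root_.Finset.max_unbotD_eq_max' {α : Type*} [LinearOrder α] {s : Finset α}
    (hs : s.Nonempty) (d : α) : s.max.unbotD d = s.max' hs := by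
  rw [← Finset.coe_max' hs, WithBot.unbotD_coe]

section Decomposition

variable (cells : Finset (ℕ × ℕ)) (Xs Ys : Finset ℕ)

/- The top cell `(x₁, yₙ)` of the paper is `(topRow Xs, lastCol Ys)` and its neck cell `(m', n')`
is `(neckRow cells Xs Ys, neckCol cells Xs Ys)`; `topRow ∅ = lastCol ∅ = 0`. -/
def topRow : ℕ := Xs.min.untopD 0

def lastCol : ℕ := Ys.max.unbotD 0

def neckRow : ℕ := ((Xs.filter fun x => (x, lastCol Ys) ∈ cells).max).unbotD 0

def neckCol : ℕ := ((Ys.filter fun y => (topRow Xs, y) ∈ cells).min).untopD 0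

def rectRows : Finset ℕ := Xs.filter (· ≤ neckRow cells Xs Ys)

def rectCols : Finset ℕ := Ys.filter (neckCol cells Xs Ys ≤ ·)

def emptyRows : Finset ℕ :=
  Xs.filter fun x => ∀ x'' ∈ Xs, x'' ≤ x → ∀ y ∈ Ys, (x'', y) ∉ cells

def emptyCols : Finset ℕ :=
  Ys.filter fun y => ∀ y'' ∈ Ys, y ≤ y'' → ∀ x ∈ Xs, (x, y'') ∉ cells

def rectCount (l : List Piece) : ℕ :=
  l.countP fun p =>
    match p with
    | Piece.fullR _ _ => true
    | Piece.ped _ _ => true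
    | Piece.emptyR _ _ => false

variable {cells Xs Ys}

lemma rectCount_decompAux_of_eq_empty (fuel : ℕ) (h : Xs = ∅ ∧ Ys = ∅) :
    rectCount (decompAux cells (fuel + 1) Xs Ys).1 = 0 := by
  rw [decompAux, if_pos h]; rfl

lemma rectCount_decompAux_of_neck_mem (fuel : ℕ) (hXY : ¬(Xs = ∅ ∧ Ys = ∅))
    (htop : (topRow Xs, lastCol Ys) ∈ cells)
    (hneck : (neckRow cells Xs Ys, neckCol cells Xs Ys) ∈ cells) :
    rectCount (decompAux cells (fuel + 1) Xs Ys).1 =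
      rectCount (decompAux cells fuel (Xs \ rectRows cells Xs Ys) (Ys \ rectCols cells Xs Ys)).1
        + 1 := by
  rw [decompAux, if_neg hXY]
  dsimp only
  split_ifs with h h'
  · simp only [rectCount, List.countP_cons]
    rfl
  · exact absurd hneck h'
  · exact absurd htop h

lemma rectCount_decompAux_of_neck_not_mem (fuel : ℕ) (hXY : ¬(Xs = ∅ ∧ Ys = ∅))
    (htop : (topRow Xs, lastCol Ys) ∈ cells)
    (hneck : (neckRow cells Xs Ys, neckCol cells Xs Ys) ∉ cells) :
    rectCount (decompAux cells (fuel + 1) Xs Ys).1 = 1 := by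
  rw [decompAux, if_neg hXY]
  dsimp only
  split_ifs with h h'
  · exact absurd h' hneck
  · rfl
  · exact absurd htop h

lemma rectCount_decompAux_of_top_not_mem (fuel : ℕ) (hXY : ¬(Xs = ∅ ∧ Ys = ∅))
    (htop : (topRow Xs, lastCol Ys) ∉ cells) :
    rectCount (decompAux cells (fuel + 1) Xs Ys).1 =
      rectCount
        (decompAux cells fuel (Xs \ emptyRows cells Xs Ys) (Ys \ emptyCols cells Xs Ys)).1 := by
  rw [decompAux, if_neg hXY]
  dsimp only
  split_ifs with h
  · exact absurd h htop
  · exact absurd h htop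
  · simp only [rectCount, List.countP_cons]
    rfl

variable {x y : ℕ}

lemma topRow_mem (hX : Xs.Nonempty) : topRow Xs ∈ Xs := by
  rw [topRow, Finset.min_untopD_eq_min' hX]
  exact Finset.min'_mem _ _

lemma topRow_le (hx : x ∈ Xs) : topRow Xs ≤ x := by
  rw [topRow, Finset.min_untopD_eq_min' ⟨x, hx⟩]
  exact Finset.min'_le _ _ hx

lemma lastCol_mem (hY : Ys.Nonempty) : lastCol Ys ∈ Ys := by
  rw [lastCol, Finset.max_unbotD_eq_max' hY]
  exact Finset.max'_mem _ _

lemma le_lastCol (hy : y ∈ Ys) : y ≤ lastCol Ys := by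
  rw [lastCol, Finset.max_unbotD_eq_max' ⟨y, hy⟩]
  exact Finset.le_max' _ _ hy

lemma nonempty_of_topRow_pos (h : 0 < topRow Xs) : Xs.Nonempty := by
  rw [Finset.nonempty_iff_ne_empty]
  rintro rfl
  exact h.ne' rfl

lemma nonempty_of_lastCol_pos (h : 0 < lastCol Ys) : Ys.Nonempty := by
  rw [Finset.nonempty_iff_ne_empty]
  rintro rfl
  exact h.ne' rfl

lemma le_neckRow (hx : x ∈ Xs) (hc : (x, lastCol Ys) ∈ cells) : x ≤ neckRow cells Xs Ys := by
  have hx' : x ∈ Xs.filter fun x => (x, lastCol Ys) ∈ cells := Finset.mem_filter.2 ⟨hx, hc⟩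
  rw [neckRow, Finset.max_unbotD_eq_max' ⟨x, hx'⟩]
  exact Finset.le_max' _ _ hx'

lemma neckRow_spec (hx : x ∈ Xs) (hc : (x, lastCol Ys) ∈ cells) :
    neckRow cells Xs Ys ∈ Xs ∧ (neckRow cells Xs Ys, lastCol Ys) ∈ cells := by
  have hx' : x ∈ Xs.filter fun x => (x, lastCol Ys) ∈ cells := Finset.mem_filter.2 ⟨hx, hc⟩
  rw [neckRow, Finset.max_unbotD_eq_max' ⟨x, hx'⟩]
  exact Finset.mem_filter.1 (Finset.max'_mem _ _)

lemma neckCol_le (hy : y ∈ Ys) (hc : (topRow Xs, y) ∈ cells) : neckCol cells Xs Ys ≤ y := by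
  have hy' : y ∈ Ys.filter fun y => (topRow Xs, y) ∈ cells := Finset.mem_filter.2 ⟨hy, hc⟩
  rw [neckCol, Finset.min_untopD_eq_min' ⟨y, hy'⟩]
  exact Finset.min'_le _ _ hy'

lemma neckCol_spec (hy : y ∈ Ys) (hc : (topRow Xs, y) ∈ cells) :
    neckCol cells Xs Ys ∈ Ys ∧ (topRow Xs, neckCol cells Xs Ys) ∈ cells := by
  have hy' : y ∈ Ys.filter fun y => (topRow Xs, y) ∈ cells := Finset.mem_filter.2 ⟨hy, hc⟩
  rw [neckCol, Finset.min_untopD_eq_min' ⟨y, hy'⟩]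
  exact Finset.mem_filter.1 (Finset.min'_mem _ _)

lemma mem_sdiff_rectRows : x ∈ Xs \ rectRows cells Xs Ys ↔ x ∈ Xs ∧ neckRow cells Xs Ys < x := by
  simp only [rectRows, Finset.mem_sdiff, Finset.mem_filter, not_and, not_le]
  tauto

lemma mem_sdiff_rectCols : y ∈ Ys \ rectCols cells Xs Ys ↔ y ∈ Ys ∧ y < neckCol cells Xs Ys := by
  simp only [rectCols, Finset.mem_sdiff, Finset.mem_filter, not_and, not_le]
  tauto

lemma card_sdiff_rectRows_add_lt (hX : Xs.Nonempty) (htop : (topRow Xs, lastCol Ys) ∈ cells) :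
    (Xs \ rectRows cells Xs Ys).card + (Ys \ rectCols cells Xs Ys).card < Xs.card + Ys.card := by
  have : (Xs \ rectRows cells Xs Ys).card < Xs.card := Finset.card_lt_card
    (Finset.sdiff_ssubset (Finset.filter_subset _ _)
      ⟨_, Finset.mem_filter.2 ⟨topRow_mem hX, le_neckRow (topRow_mem hX) htop⟩⟩)
  have := Finset.card_le_card (Finset.sdiff_subset (s := Ys) (t := rectCols cells Xs Ys))
  omega

lemma topRow_mem_emptyRows (hX : Xs.Nonempty) (h : ∀ y ∈ Ys, (topRow Xs, y) ∉ cells) :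
    topRow Xs ∈ emptyRows cells Xs Ys := by
  refine Finset.mem_filter.2 ⟨topRow_mem hX, fun x hx hle => ?_⟩
  rwa [le_antisymm hle (topRow_le hx)]

lemma lastCol_mem_emptyCols (hY : Ys.Nonempty) (h : ∀ x ∈ Xs, (x, lastCol Ys) ∉ cells) :
    lastCol Ys ∈ emptyCols cells Xs Ys := by
  refine Finset.mem_filter.2 ⟨lastCol_mem hY, fun y hy hle => ?_⟩
  rwa [le_antisymm (le_lastCol hy) hle]

lemma mem_sdiff_emptyRows (hx : x ∈ Xs) (hy : y ∈ Ys) (hc : (x, y) ∈ cells) :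
    x ∈ Xs \ emptyRows cells Xs Ys := by
  simp only [emptyRows, Finset.mem_sdiff, Finset.mem_filter, not_and, not_forall, not_not]
  exact ⟨hx, fun _ => ⟨x, hx, le_rfl, y, hy, hc⟩⟩

lemma mem_sdiff_emptyCols (hx : x ∈ Xs) (hy : y ∈ Ys) (hc : (x, y) ∈ cells) :
    y ∈ Ys \ emptyCols cells Xs Ys := by
  simp only [emptyCols, Finset.mem_sdiff, Finset.mem_filter, not_and, not_forall, not_not]
  exact ⟨hy, fun _ => ⟨y, hy, le_rfl, x, hx, hc⟩⟩

end Decomposition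

def Separated (P : ℕ × ℕ → Prop) (c c' : ℕ × ℕ) : Prop :=
  c.1 < c'.1 ∧ c'.2 < c.2 ∧ ¬P (c'.1, c.2) ∧ ¬P (c.1, c'.2)

def IsSeparatedChain (P : ℕ × ℕ → Prop) (l : List (ℕ × ℕ)) : Prop :=
  (∀ c ∈ l, P c) ∧ l.Pairwise (Separated P)

namespace IsSeparatedChain

variable {P Q : ℕ × ℕ → Prop} {c : ℕ × ℕ} {l : List (ℕ × ℕ)}

@[simp] lemma nil : IsSeparatedChain P [] := by simp [IsSeparatedChain]

lemma cons_iff :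
    IsSeparatedChain P (c :: l) ↔ P c ∧ (∀ e ∈ l, Separated P c e) ∧ IsSeparatedChain P l := by
  simp only [IsSeparatedChain, List.mem_cons, forall_eq_or_imp, List.pairwise_cons]
  tauto

lemma congr {Xs Ys : Finset ℕ} (hPQ : ∀ x ∈ Xs, ∀ y ∈ Ys, P (x, y) ↔ Q (x, y))
    (hl : ∀ c ∈ l, c.1 ∈ Xs ∧ c.2 ∈ Ys) (h : IsSeparatedChain P l) : IsSeparatedChain Q l := by
  refine ⟨fun c hc => (hPQ _ (hl c hc).1 _ (hl c hc).2).1 (h.1 c hc), h.2.imp_of_mem ?_⟩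
  rintro c c' hc hc' ⟨h1, h2, h3, h4⟩
  exact ⟨h1, h2, fun h => h3 ((hPQ _ (hl c' hc').1 _ (hl c hc).2).2 h),
    fun h => h4 ((hPQ _ (hl c hc).1 _ (hl c' hc').2).2 h)⟩

end IsSeparatedChain

section LowerBound

variable {cells : Finset (ℕ × ℕ)} {Xs Ys : Finset ℕ}

lemma separated_top_of_mem_sdiff (hX : Xs.Nonempty) (hY : Ys.Nonempty)
    (htop : (topRow Xs, lastCol Ys) ∈ cells) {e : ℕ × ℕ}
    (he₁ : e.1 ∈ Xs \ rectRows cells Xs Ys) (he₂ : e.2 ∈ Ys \ rectCols cells Xs Ys) :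
    Separated (· ∈ cells) (topRow Xs, lastCol Ys) e := by
  rw [mem_sdiff_rectRows] at he₁
  rw [mem_sdiff_rectCols] at he₂
  have h₁ := le_neckRow (topRow_mem hX) htop
  have h₂ := neckCol_le (lastCol_mem hY) htop
  refine ⟨by omega, by omega, fun hc => ?_, fun hc => ?_⟩
  · exact absurd (le_neckRow he₁.1 hc) (by omega)
  · exact absurd (neckCol_le he₂.1 hc) (by omega)

lemma exists_separatedChain_length_eq_rectCount (hpos : ∀ c ∈ cells, 0 < c.1 ∧ 0 < c.2)
    (fuel : ℕ) (Xs Ys : Finset ℕ) :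
    ∃ l, IsSeparatedChain (· ∈ cells) l ∧ (∀ c ∈ l, c.1 ∈ Xs ∧ c.2 ∈ Ys) ∧
      l.length = rectCount (decompAux cells fuel Xs Ys).1 := by
  induction fuel generalizing Xs Ys with
  | zero => exact ⟨[], by simp, by simp, rfl⟩
  | succ fuel ih =>
    by_cases hXY : Xs = ∅ ∧ Ys = ∅
    · exact ⟨[], by simp, by simp, (rectCount_decompAux_of_eq_empty fuel hXY).symm⟩
    by_cases htop : (topRow Xs, lastCol Ys) ∈ cells
    swap
    · obtain ⟨l, hl, hmem, hlen⟩ := ih (Xs \ emptyRows cells Xs Ys) (Ys \ emptyCols cells Xs Ys)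
      refine ⟨l, hl, fun c hc => ?_, ?_⟩
      · exact ⟨(Finset.mem_sdiff.1 (hmem c hc).1).1, (Finset.mem_sdiff.1 (hmem c hc).2).1⟩
      · rw [hlen, rectCount_decompAux_of_top_not_mem fuel hXY htop]
    have hX := nonempty_of_topRow_pos (hpos _ htop).1
    have hY := nonempty_of_lastCol_pos (hpos _ htop).2
    have htop_mem : (topRow Xs, lastCol Ys).1 ∈ Xs ∧ (topRow Xs, lastCol Ys).2 ∈ Ys :=
      ⟨topRow_mem hX, lastCol_mem hY⟩
    by_cases hneck : (neckRow cells Xs Ys, neckCol cells Xs Ys) ∈ cells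
    · obtain ⟨l, hl, hmem, hlen⟩ := ih (Xs \ rectRows cells Xs Ys) (Ys \ rectCols cells Xs Ys)
      refine ⟨(topRow Xs, lastCol Ys) :: l, ?_, ?_, ?_⟩
      · exact IsSeparatedChain.cons_iff.2 ⟨htop,
          fun e he => separated_top_of_mem_sdiff hX hY htop (hmem e he).1 (hmem e he).2, hl⟩
      · simp only [List.mem_cons, forall_eq_or_imp]
        exact ⟨htop_mem, fun c hc =>
          ⟨(Finset.mem_sdiff.1 (hmem c hc).1).1, (Finset.mem_sdiff.1 (hmem c hc).2).1⟩⟩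
      · rw [rectCount_decompAux_of_neck_mem fuel hXY htop hneck, List.length_cons, hlen]
    · refine ⟨[(topRow Xs, lastCol Ys)], ?_, by simpa using htop_mem, ?_⟩
      · simpa [IsSeparatedChain.cons_iff] using htop
      · rw [rectCount_decompAux_of_neck_not_mem fuel hXY htop hneck, List.length_singleton]

end LowerBound

lemma add_apply_le_add_apply {f : ℕ → ℕ} (hf : ∀ i, 1 ≤ i → 0 < f (i + 1) → f (i + 1) < f i)
    {a b : ℕ} (ha : 1 ≤ a) (hab : a ≤ b) (hb : 0 < f b) : b + f b ≤ a + f a := by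
  induction b, hab using Nat.le_induction with
  | base => exact le_rfl
  | succ b hab ih =>
    have := hf b (ha.trans hab) hb
    have := ih (by omega)
    omega

namespace ShiftedSkew

variable (D : ShiftedSkew)

lemma lam_end_le {a b : ℕ} (ha : 1 ≤ a) (hab : a ≤ b) (hb : 0 < D.lam b) :
    b + D.lam b ≤ a + D.lam a :=
  add_apply_le_add_apply D.lam_strict ha hab hb

lemma mu_end_le {a b : ℕ} (ha : 1 ≤ a) (hab : a ≤ b) (hb : 0 < D.mu b) :
    b + D.mu b ≤ a + D.mu a :=
  add_apply_le_add_apply D.mu_strict ha hab hb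

variable {D}

lemma HasCell.pos {c : ℕ × ℕ} (h : D.HasCell c) : 0 < c.1 ∧ 0 < c.2 := by
  obtain ⟨h₁, h₂, -⟩ := h
  omega

lemma hasCell_northEast {x₁ x y yₙ : ℕ} (h₁ : D.HasCell (x₁, y)) (h₂ : D.HasCell (x, yₙ))
    (hx : x₁ ≤ x) (hy : y ≤ yₙ) : D.HasCell (x₁, yₙ) := by
  simp only [HasCell] at *
  obtain ⟨ha₁, ha₂, ha₃⟩ := h₁
  obtain ⟨hb₁, hb₂, hb₃⟩ := h₂
  have := D.lam_end_le ha₁ hx (by omega)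
  exact ⟨ha₁, by omega, by omega⟩

lemma hasCell_of_mem_rectangle {x₁ m n yₙ x y : ℕ}
    (hcorner : D.HasCell (m, yₙ)) (htop : D.HasCell (x₁, n)) (hneck : D.HasCell (m, n))
    (hx₁ : x₁ ≤ x) (hxm : x ≤ m) (hny : n ≤ y) (hyₙ : y ≤ yₙ) : D.HasCell (x, y) := by
  simp only [HasCell] at *
  obtain ⟨hm₁, hm₂, hm₃⟩ := hcorner
  obtain ⟨ht₁, ht₂, ht₃⟩ := htop
  obtain ⟨-, hn₂, -⟩ := hneck
  have hlam := D.lam_end_le (ht₁.trans hx₁) hxm (by omega)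
  refine ⟨ht₁.trans hx₁, ?_, by omega⟩
  rcases Nat.eq_zero_or_pos (D.mu x) with h | h
  · omega
  · have := D.mu_end_le ht₁ hx₁ h
    omega

lemma separated_hasCell {a b a' b' : ℕ} (hc : D.HasCell (a, b)) (hc' : D.HasCell (a', b'))
    (hsep : Separated D.HasCell (a, b) (a', b')) :
    a' + D.lam a' < b ∧ b' ≤ a + D.mu a ∧ 0 < D.mu a := by
  simp only [HasCell, Separated] at *
  obtain ⟨ha₁, ha₂, ha₃⟩ := hc
  obtain ⟨ha₁', ha₂', ha₃'⟩ := hc'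
  obtain ⟨hlt, hlt', hno, hno'⟩ := hsep
  have h₁ : a' + D.lam a' < b := by
    by_contra h
    exact hno ⟨ha₁.trans hlt.le, by omega, by omega⟩
  have h₂ : b' ≤ a + D.mu a := by
    by_contra h
    exact hno' ⟨ha₁, by omega, by omega⟩
  exact ⟨h₁, h₂, by omega⟩

lemma separated_beyond_neck {x₁ m n yₙ : ℕ} {c e : ℕ × ℕ}
    (hcorner : D.HasCell (m, yₙ)) (htop : D.HasCell (x₁, n)) (hneck : D.HasCell (m, n))
    (hc : D.HasCell c) (he : D.HasCell e) (hx₁ : x₁ ≤ c.1) (hyₙ : c.2 ≤ yₙ)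
    (hsep : Separated D.HasCell c e) : m < e.1 ∧ e.2 < n := by
  obtain ⟨a, b⟩ := c
  obtain ⟨a', b'⟩ := e
  dsimp only at hx₁ hyₙ ⊢
  obtain ⟨hrow, hcol, hmu⟩ := separated_hasCell hc he hsep
  have ht₁ : 1 ≤ x₁ := htop.1
  have ht₂ : x₁ + D.mu x₁ < n := htop.2.1
  have hn₂ : m + D.mu m < n := hneck.2.1
  have hn₃ : n ≤ m + D.lam m := hneck.2.2
  have hlt : a < a' := hsep.1
  have he₁ : 1 ≤ a' := he.1
  have hmu_le := D.mu_end_le ht₁ hx₁ hmu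
  refine ⟨?_, by omega⟩
  by_contra! ha'
  rcases le_or_gt n b with hnb | hbn
  · exact hsep.2.2.1 (hasCell_of_mem_rectangle hcorner htop hneck (by omega) ha' hnb hyₙ)
  · have := D.lam_end_le he₁ ha' (by omega)
    omega

lemma not_separated_of_not_neck {x₁ m n yₙ : ℕ} {c e : ℕ × ℕ}
    (hcorner : D.HasCell (m, yₙ)) (htop : D.HasCell (x₁, n)) (hneck : ¬D.HasCell (m, n))
    (hxm : x₁ ≤ m) (hnyₙ : n ≤ yₙ)
    (hc : D.HasCell c) (he : D.HasCell e) (hx₁ : x₁ ≤ c.1) (hyₙ : c.2 ≤ yₙ) :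
    ¬Separated D.HasCell c e := by
  obtain ⟨a, b⟩ := c
  obtain ⟨a', b'⟩ := e
  dsimp only at hx₁ hyₙ
  intro hsep
  obtain ⟨hrow, hcol, hmu⟩ := separated_hasCell hc he hsep
  obtain ⟨hm₁, hm₂, hm₃⟩ := hcorner
  obtain ⟨ht₁, ht₂, -⟩ := htop
  obtain ⟨he₁, he₂, -⟩ := he
  dsimp only at *
  -- `(m, n)` misses row `m` on the left, and `(x₁, n)` is a cell: this forces `μ m = 0`
  have hnm : n ≤ m + D.mu m := by
    by_contra h
    exact hneck (show 1 ≤ m ∧ m + D.mu m < n ∧ n ≤ m + D.lam m by omega)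
  have hmu_m : D.mu m = 0 := by
    by_contra h
    have := D.mu_end_le ht₁ hxm (by omega)
    omega
  have := D.mu_end_le ht₁ hx₁ hmu
  have := D.lam_end_le he₁ (show a' ≤ m by omega) (by omega)
  omega

end ShiftedSkew

section UpperBound

variable {D : ShiftedSkew} {cells : Finset (ℕ × ℕ)} {Xs Ys : Finset ℕ}

lemma card_sdiff_emptyRows_add_lt (hcells : ∀ x ∈ Xs, ∀ y ∈ Ys, (x, y) ∈ cells ↔ D.HasCell (x, y))
    (hX : Xs.Nonempty) (hY : Ys.Nonempty) (htop : (topRow Xs, lastCol Ys) ∉ cells) :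
    (Xs \ emptyRows cells Xs Ys).card + (Ys \ emptyCols cells Xs Ys).card < Xs.card + Ys.card := by
  have hXle := Finset.card_le_card (Finset.sdiff_subset (s := Xs) (t := emptyRows cells Xs Ys))
  have hYle := Finset.card_le_card (Finset.sdiff_subset (s := Ys) (t := emptyCols cells Xs Ys))
  by_cases hrow : ∀ y ∈ Ys, (topRow Xs, y) ∉ cells
  · have : (Xs \ emptyRows cells Xs Ys).card < Xs.card := Finset.card_lt_card
      (Finset.sdiff_ssubset (Finset.filter_subset _ _) ⟨_, topRow_mem_emptyRows hX hrow⟩)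
    omega
  by_cases hcol : ∀ x ∈ Xs, (x, lastCol Ys) ∉ cells
  · have : (Ys \ emptyCols cells Xs Ys).card < Ys.card := Finset.card_lt_card
      (Finset.sdiff_ssubset (Finset.filter_subset _ _) ⟨_, lastCol_mem_emptyCols hY hcol⟩)
    omega
  push Not at hrow hcol
  obtain ⟨y, hy, hrow⟩ := hrow
  obtain ⟨x, hx, hcol⟩ := hcol
  refine absurd ((hcells _ (topRow_mem hX) _ (lastCol_mem hY)).2 ?_) htop
  exact ShiftedSkew.hasCell_northEast ((hcells _ (topRow_mem hX) _ hy).1 hrow)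
    ((hcells _ hx _ (lastCol_mem hY)).1 hcol) (topRow_le hx) (le_lastCol hy)

lemma mem_sdiff_rect_of_separated
    (hcells : ∀ x ∈ Xs, ∀ y ∈ Ys, (x, y) ∈ cells ↔ D.HasCell (x, y))
    (htop : (topRow Xs, lastCol Ys) ∈ cells)
    (hneck : (neckRow cells Xs Ys, neckCol cells Xs Ys) ∈ cells) {c e : ℕ × ℕ}
    (hc : c.1 ∈ Xs ∧ c.2 ∈ Ys) (he : e.1 ∈ Xs ∧ e.2 ∈ Ys) (hcD : D.HasCell c)
    (heD : D.HasCell e) (hsep : Separated D.HasCell c e) :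
    e.1 ∈ Xs \ rectRows cells Xs Ys ∧ e.2 ∈ Ys \ rectCols cells Xs Ys := by
  have hx₁ := topRow_mem ⟨_, hc.1⟩
  have hyₙ := lastCol_mem ⟨_, hc.2⟩
  obtain ⟨hmX, hm⟩ := neckRow_spec hx₁ htop
  obtain ⟨hnY, hn⟩ := neckCol_spec hyₙ htop
  obtain ⟨hme, hen⟩ := ShiftedSkew.separated_beyond_neck ((hcells _ hmX _ hyₙ).1 hm)
    ((hcells _ hx₁ _ hnY).1 hn) ((hcells _ hmX _ hnY).1 hneck) hcD heD (topRow_le hc.1)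
    (le_lastCol hc.2) hsep
  exact ⟨mem_sdiff_rectRows.2 ⟨he.1, hme⟩, mem_sdiff_rectCols.2 ⟨he.2, hen⟩⟩

lemma not_separated_of_neck_not_mem
    (hcells : ∀ x ∈ Xs, ∀ y ∈ Ys, (x, y) ∈ cells ↔ D.HasCell (x, y))
    (htop : (topRow Xs, lastCol Ys) ∈ cells)
    (hneck : (neckRow cells Xs Ys, neckCol cells Xs Ys) ∉ cells) {c e : ℕ × ℕ}
    (hc : c.1 ∈ Xs ∧ c.2 ∈ Ys) (hcD : D.HasCell c) (heD : D.HasCell e) :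
    ¬Separated D.HasCell c e := by
  have hx₁ := topRow_mem ⟨_, hc.1⟩
  have hyₙ := lastCol_mem ⟨_, hc.2⟩
  obtain ⟨hmX, hm⟩ := neckRow_spec hx₁ htop
  obtain ⟨hnY, hn⟩ := neckCol_spec hyₙ htop
  exact ShiftedSkew.not_separated_of_not_neck ((hcells _ hmX _ hyₙ).1 hm)
    ((hcells _ hx₁ _ hnY).1 hn) (fun h => hneck ((hcells _ hmX _ hnY).2 h))
    (le_neckRow hx₁ htop) (neckCol_le hyₙ htop) hcD heD (topRow_le hc.1) (le_lastCol hc.2)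

lemma length_le_rectCount (hcells : ∀ x ∈ Xs, ∀ y ∈ Ys, (x, y) ∈ cells ↔ D.HasCell (x, y))
    {fuel : ℕ} (hfuel : Xs.card + Ys.card < fuel) {l : List (ℕ × ℕ)}
    (hl : IsSeparatedChain D.HasCell l) (hmem : ∀ c ∈ l, c.1 ∈ Xs ∧ c.2 ∈ Ys) :
    l.length ≤ rectCount (decompAux cells fuel Xs Ys).1 := by
  induction fuel generalizing Xs Ys l with
  | zero => omega
  | succ fuel ih =>
    obtain _ | ⟨c, L⟩ := l
    · exact Nat.zero_le _
    obtain ⟨hc, hsep, hL⟩ := IsSeparatedChain.cons_iff.1 hl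
    obtain ⟨hcX, hcY⟩ := hmem c List.mem_cons_self
    have hX : Xs.Nonempty := ⟨_, hcX⟩
    have hY : Ys.Nonempty := ⟨_, hcY⟩
    have hXY : ¬(Xs = ∅ ∧ Ys = ∅) := fun h => hX.ne_empty h.1
    have hsub {Xs' Ys' : Finset ℕ} (hX' : Xs' ⊆ Xs) (hY' : Ys' ⊆ Ys) :
        ∀ x ∈ Xs', ∀ y ∈ Ys', (x, y) ∈ cells ↔ D.HasCell (x, y) :=
      fun x hx y hy => hcells x (hX' hx) y (hY' hy)
    by_cases htop : (topRow Xs, lastCol Ys) ∈ cells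
    swap
    · rw [rectCount_decompAux_of_top_not_mem fuel hXY htop]
      refine ih (hsub Finset.sdiff_subset Finset.sdiff_subset) ?_ hl fun e he => ?_
      · have := card_sdiff_emptyRows_add_lt hcells hX hY htop
        omega
      · obtain ⟨heX, heY⟩ := hmem e he
        have hce := (hcells _ heX _ heY).2 (hl.1 e he)
        exact ⟨mem_sdiff_emptyRows heX heY hce, mem_sdiff_emptyCols heX heY hce⟩
    by_cases hneck : (neckRow cells Xs Ys, neckCol cells Xs Ys) ∈ cells
    · rw [rectCount_decompAux_of_neck_mem fuel hXY htop hneck, List.length_cons]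
      refine Nat.succ_le_succ (ih (hsub Finset.sdiff_subset Finset.sdiff_subset) ?_ hL
        fun e he => ?_)
      · have := card_sdiff_rectRows_add_lt hX htop
        omega
      · exact mem_sdiff_rect_of_separated hcells htop hneck ⟨hcX, hcY⟩
          (hmem e (List.mem_cons_of_mem _ he)) hc (hL.1 e he) (hsep e he)
    · rw [rectCount_decompAux_of_neck_not_mem fuel hXY htop hneck]
      obtain _ | ⟨e, L'⟩ := L
      · exact le_rfl
      exact absurd (hsep e List.mem_cons_self) (not_separated_of_neck_not_mem hcells htop hneck
        ⟨hcX, hcY⟩ hc (hL.1 e List.mem_cons_self))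

end UpperBound

lemma mem_restrictD_iff {D : ShiftedSkew} {Xs Ys : Finset ℕ} {x y : ℕ} (hx : x ∈ Xs) (hy : y ∈ Ys) :
    (x, y) ∈ restrictD D Xs Ys ↔ D.HasCell (x, y) := by
  simp [restrictD, hx, hy]

lemma length_le_rectNum {D : ShiftedSkew} {Xs Ys : Finset ℕ} {l : List (ℕ × ℕ)}
    (hl : IsSeparatedChain D.HasCell l) (hmem : ∀ c ∈ l, c.1 ∈ Xs ∧ c.2 ∈ Ys) :
    l.length ≤ rectNum (restrictD D Xs Ys) Xs Ys :=
  length_le_rectCount (fun _ hx _ hy => mem_restrictD_iff hx hy) (Nat.lt_succ_self _) hl hmem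

lemma exists_separatedChain_length_eq_rectNum (D : ShiftedSkew) (Xs Ys : Finset ℕ) :
    ∃ l, IsSeparatedChain D.HasCell l ∧ (∀ c ∈ l, c.1 ∈ Xs ∧ c.2 ∈ Ys) ∧
      l.length = rectNum (restrictD D Xs Ys) Xs Ys := by
  obtain ⟨l, hl, hmem, hlen⟩ := exists_separatedChain_length_eq_rectCount
    (cells := restrictD D Xs Ys) (fun c hc => (Finset.mem_filter.1 hc).2.pos)
    (Xs.card + Ys.card + 1) Xs Ys
  exact ⟨l, hl.congr (fun _ hx _ hy => mem_restrictD_iff hx hy) hmem, hmem, hlen⟩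

theorem rect_monotone_general (D : ShiftedSkew) (Xs Ys Xs' Ys' : Finset ℕ)
    (hX' : Xs' ⊆ Xs) (hY' : Ys' ⊆ Ys) :
    rectNum (restrictD D Xs' Ys') Xs' Ys' ≤ rectNum (restrictD D Xs Ys) Xs Ys := by
  obtain ⟨l, hl, hmem, hlen⟩ := exists_separatedChain_length_eq_rectNum D Xs' Ys'
  rw [← hlen]
  exact length_le_rectNum hl fun c hc => ⟨hX' (hmem c hc).1, hY' (hmem c hc).2⟩

/-- **Statement 10.**  For any nonempty diagram of the form `D_{XY}` arising from a
shifted skew diagram `D`, and any subsets `X' ⊆ X` and `Y' ⊆ Y`, one has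
`rect(D_{X'Y'}) ≤ rect(D_{XY})`. -/
theorem rect_monotone (D : ShiftedSkew) (Xs Ys Xs' Ys' : Finset ℕ)
    (hX : ∀ x ∈ Xs, 1 ≤ x) (hY : ∀ y ∈ Ys, 1 ≤ y)
    (hne : (restrictD D Xs Ys).Nonempty) (hX' : Xs' ⊆ Xs) (hY' : Ys' ⊆ Ys) :
    rectNum (restrictD D Xs' Ys') Xs' Ys' ≤ rectNum (restrictD D Xs Ys) Xs Ys :=
  rect_monotone_general D Xs Ys Xs' Ys' hX' hY'

end SkewDiag
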